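/- arXiv:1202.1185 — 6 statements merged into one kernel-verified Lean document; each statement's English description precedes it below -/
import Mathlib

section
/- Let K be a field of characteristic different from 2 whose absolute Galois group Gal(K^sep/K) is topologically finitely generated. Then the quotient group K^×/(K^×)^2 of the multiplicative group of K by its subgroup of nonzero squares is finite. -/
/-!
Kummer theory in degree two: for `a ∈ Kˣ` with a square root `√a` in `K^sep`, the map
`σ ↦ σ(√a)/√a = ±1` is a continuous character of the Galois group, and `a` is a square exactly
when this character is trivial. A continuous character is determined by its values on a set of
topological generators, so a finite generating set `S` leaves at most `2 ^ |S|` square classes.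
-/

theorem QuotientGroup.finite_of_forall_eq_imp_inv_mul_mem {G T : Type*} [Group G] [Finite T]
    {H : Subgroup G} (f : G → T) (hf : ∀ a b, f a = f b → a⁻¹ * b ∈ H) : Finite (G ⧸ H) :=
  Finite.of_injective (fun q : G ⧸ H => f q.out) fun p q hpq => by
    rw [← QuotientGroup.out_eq' p, ← QuotientGroup.out_eq' q]
    exact QuotientGroup.eq.mpr (hf _ _ hpq)

theorem Units.mem_range_powMonoidHom_two {M : Type*} [CommGroupWithZero M] {u : Mˣ} {e : M}
    (he : e ^ 2 = u) : u ∈ (powMonoidHom 2 : Mˣ →* Mˣ).range := by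
  have he0 : e ≠ 0 := by
    rintro rfl
    exact u.ne_zero (by simpa using he.symm)
  exact ⟨Units.mk0 e he0, Units.ext (by simpa using he)⟩

theorem map_div_eq_div_of_map_sq_eq {L F : Type*} [Field L] [FunLike F L L]
    [MonoidWithZeroHomClass F L L] (σ : F) {x y : L} (hx : σ x ^ 2 = x ^ 2)
    (hy : σ y ^ 2 = y ^ 2) (hxy : σ x = x ↔ σ y = y) : σ (y / x) = y / x := by
  rw [map_div₀]
  by_cases hσx : σ x = x
  · rw [hσx, hxy.mp hσx]
  · have hσy : σ y ≠ y := hxy.not.mp hσx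
    rw [(sq_eq_sq_iff_eq_or_eq_neg.mp hx).resolve_left hσx,
      (sq_eq_sq_iff_eq_or_eq_neg.mp hy).resolve_left hσy, neg_div_neg_eq]

section Galois

variable {K L : Type*} [Field K] [Field L] [Algebra K L]

-- Stabilizers are open, hence closed, in the Krull topology.
theorem AlgEquiv.apply_eq_self_of_dense_closure [Algebra.IsIntegral K L]
    {S : Set (L ≃ₐ[K] L)} (hS : Dense (Subgroup.closure S : Set (L ≃ₐ[K] L))) {x : L}
    (hx : ∀ s ∈ S, s x = x) (σ : L ≃ₐ[K] L) : σ x = x := by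
  have hle : Subgroup.closure S ≤ MulAction.stabilizer (L ≃ₐ[K] L) x :=
    (Subgroup.closure_le _).mpr hx
  have hclosed : IsClosed (MulAction.stabilizer (L ≃ₐ[K] L) x : Set (L ≃ₐ[K] L)) :=
    Subgroup.isClosed_of_isOpen _ (stabilizer_isOpen_of_isIntegral x)
  exact hclosed.closure_subset_iff.mpr hle (hS.closure_eq.symm ▸ Set.mem_univ σ)

theorem div_mem_range_algebraMap_of_dense_closure [IsGalois K L] {S : Set (L ≃ₐ[K] L)}
    (hS : Dense (Subgroup.closure S : Set (L ≃ₐ[K] L))) {x y : L}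
    (hx : x ^ 2 ∈ Set.range (algebraMap K L)) (hy : y ^ 2 ∈ Set.range (algebraMap K L))
    (hxy : ∀ s ∈ S, s x = x ↔ s y = y) : y / x ∈ Set.range (algebraMap K L) := by
  have hfix : ∀ (σ : L ≃ₐ[K] L) {z : L}, z ^ 2 ∈ Set.range (algebraMap K L) → σ z ^ 2 = z ^ 2 :=
    fun σ z hz => by rw [← map_pow]; exact (InfiniteGalois.mem_range_algebraMap_iff_fixed _).mp hz σ
  rw [InfiniteGalois.mem_range_algebraMap_iff_fixed]
  exact AlgEquiv.apply_eq_self_of_dense_closure hS fun s hs =>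
    map_div_eq_div_of_map_sq_eq s (hfix s hx) (hfix s hy) (hxy s hs)

end Galois

/-- If `K` is a field of characteristic different from `2` whose absolute Galois group
`Gal(K^sep/K)` is topologically finitely generated, then `Kˣ/(Kˣ)²` is finite. -/
theorem stmt_0 (K : Type*) [Field K] (hchar : ringChar K ≠ 2)
    (Ω : Type*) [Field Ω] [Algebra K Ω] [IsSepClosure K Ω]
    (htfg : ∃ S : Finset (Ω ≃ₐ[K] Ω),
      Dense ((Subgroup.closure (S : Set (Ω ≃ₐ[K] Ω)) : Subgroup (Ω ≃ₐ[K] Ω)) : Set (Ω ≃ₐ[K] Ω))) :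
    Finite (Kˣ ⧸ (powMonoidHom 2 : Kˣ →* Kˣ).range) := by
  obtain ⟨S, hS⟩ := htfg
  have : IsSepClosed Ω := IsSepClosure.sep_closed K
  have : NeZero (2 : Ω) :=
    ⟨map_ofNat (algebraMap K Ω) 2 ▸ (map_ne_zero _).mpr (Ring.two_ne_zero hchar)⟩
  choose r hr using fun a : Kˣ => IsSepClosed.exists_pow_nat_eq (algebraMap K Ω a) 2
  refine QuotientGroup.finite_of_forall_eq_imp_inv_mul_mem (fun a (s : S) => s.1 (r a) = r a)
    fun a b hab => ?_
  obtain ⟨e, he⟩ := div_mem_range_algebraMap_of_dense_closure hS ⟨_, (hr a).symm⟩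
    ⟨_, (hr b).symm⟩ fun s hs => iff_of_eq (congrFun hab ⟨s, hs⟩)
  refine Units.mem_range_powMonoidHom_two (e := e) (FaithfulSMul.algebraMap_injective K Ω ?_)
  rw [map_pow, he, div_pow, hr, hr]
  simp [div_eq_inv_mul]
end

section
/- Let K be an infinite field of characteristic different from 2 such that the quotient group K^×/(K^×)^2 is finite. Let g be a natural number and let a_1, …, a_{2g+2} be pairwise distinct elements of K. Then there exist a finite subset C ⊆ K and a finite set L ⊆ K × (K \ {0}) such that for every c ∈ K \ C there exist a pair (r, s) ∈ L and an element y ∈ K with y^2 = ∏_{j=1}^{2g+2} ((c − r)/s − a_j). -/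
open Finset

/-- In an infinite field we can find weights all of whose nonempty subset sums are nonzero. -/
lemma exists_good_weights (K : Type*) [Field K] [Infinite K] (ι : Type) [Fintype ι] :
    ∃ w : ι → K, ∀ S : Finset ι, S.Nonempty → ∑ i ∈ S, w i ≠ 0 := by
  classical
  suffices h : ∀ U : Finset ι, ∃ w : ι → K, ∀ S ⊆ U, S.Nonempty → ∑ i ∈ S, w i ≠ 0 by
    obtain ⟨w, hw⟩ := h Finset.univ
    exact ⟨w, fun S hS => hw S (Finset.subset_univ S) hS⟩
  intro U
  induction U using Finset.induction_on with
  | empty =>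
      refine ⟨fun _ => 0, fun S hS hSne => ?_⟩
      obtain ⟨i, hi⟩ := hSne
      exact absurd (hS hi) (Finset.notMem_empty i)
  | @insert j U hj ih =>
      obtain ⟨w, hw⟩ := ih
      obtain ⟨v, hv⟩ := Infinite.exists_notMem_finset
        (U.powerset.image fun T => -∑ i ∈ T, w i)
      refine ⟨Function.update w j v, fun S hS hSne => ?_⟩
      by_cases hjS : j ∈ S
      · have herase : S.erase j ⊆ U := by
          intro i hi
          rcases Finset.mem_insert.mp (hS (Finset.mem_of_mem_erase hi)) with h | h
          · exact absurd h (Finset.ne_of_mem_erase hi)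
          · exact h
        rw [← Finset.add_sum_erase _ _ hjS]
        have h1 : Function.update w j v j = v := Function.update_self _ _ _
        have h2 : ∑ i ∈ S.erase j, Function.update w j v i = ∑ i ∈ S.erase j, w i :=
          Finset.sum_congr rfl fun i hi =>
            Function.update_of_ne (Finset.ne_of_mem_erase hi) _ _
        rw [h1, h2]
        intro hcon
        exact hv (Finset.mem_image.mpr ⟨S.erase j, Finset.mem_powerset.mpr herase,
          neg_eq_of_add_eq_zero_left hcon⟩)
      · have hSU : S ⊆ U := fun i hi =>
          (Finset.mem_insert.mp (hS hi)).resolve_left (fun h => hjS (by rw [← h]; exact hi))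
        have h2 : ∑ i ∈ S, Function.update w j v i = ∑ i ∈ S, w i :=
          Finset.sum_congr rfl fun i hi =>
            Function.update_of_ne (fun h => hjS (by rw [← h]; exact hi)) _ _
        rw [h2]; exact hw S hSU hSne

/-- If `K` is an infinite field of characteristic different from `2` with `Kˣ/(Kˣ)²` finite,
`g : ℕ`, and `a₁, …, a_{2g+2}` are pairwise distinct elements of `K`, then there exist a finite
set `C ⊆ K` and a finite set `L` of pairs `(r, s)` with `s ≠ 0` (encoding the degree-one
polynomials `λ(t) = (t - r)/s`) such that for every `c ∈ K \ C` there are `(r, s) ∈ L` and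
`y ∈ K` with `y² = ∏ⱼ ((c - r)/s - aⱼ)`. -/
theorem stmt_2 (K : Type*) [Field K] [Infinite K] (hchar : ringChar K ≠ 2)
    (hQ : Finite (Kˣ ⧸ (powMonoidHom 2 : Kˣ →* Kˣ).range))
    (g : ℕ) (a : Fin (2 * g + 2) → K) (ha : Function.Injective a) :
    ∃ (C : Finset K) (L : Finset (K × K)), (∀ p ∈ L, p.2 ≠ 0) ∧
      ∀ c : K, c ∉ C → ∃ p ∈ L, ∃ y : K,
        y ^ 2 = ∏ j : Fin (2 * g + 2), ((c - p.1) / p.2 - a j) := by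
  classical
  set H : Subgroup Kˣ := (powMonoidHom 2 : Kˣ →* Kˣ).range with hHdef
  haveI : Finite (Kˣ ⧸ H) := hQ
  obtain ⟨ι, ιinst, hHJ⟩ :=
    Combinatorics.Line.exists_mono_in_high_dimension (Fin (2 * g + 2)) (Kˣ ⧸ H)
  obtain ⟨w, hw⟩ := exists_good_weights K ι
  set π := QuotientGroup.mk' H with hπdef
  set cls : K → Kˣ ⧸ H := fun z => π (if h : z = 0 then 1 else Units.mk0 z h) with hclsdef
  set x : (ι → Fin (2 * g + 2)) → K := fun t => ∑ i, w i * a (t i) with hxdef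
  set rf : (ι → Option (Fin (2 * g + 2))) → K :=
    fun d => ∑ i, (d i).elim 0 (fun v => w i * a v) with hrfdef
  set sf : (ι → Option (Fin (2 * g + 2))) → K :=
    fun d => ∑ i, if d i = none then w i else 0 with hsfdef
  have hsf_sum : ∀ d : ι → Option (Fin (2 * g + 2)),
      sf d = ∑ i ∈ Finset.univ.filter (fun i => d i = none), w i := by
    intro d
    rw [hsfdef, Finset.sum_filter]
  refine ⟨Finset.image x Finset.univ,
    Finset.image (fun d => (rf d, sf d)) (Finset.univ.filter fun d => sf d ≠ 0), ?_, ?_⟩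
  · intro p hp
    obtain ⟨d, hd, rfl⟩ := Finset.mem_image.mp hp
    exact (Finset.mem_filter.mp hd).2
  intro c hc
  obtain ⟨l, q0, hl⟩ := hHJ fun t => cls (c - x t)
  -- the scaling is nonzero
  have hs0 : sf l.idxFun ≠ 0 := by
    rw [hsf_sum]
    apply hw
    obtain ⟨i, hi⟩ := l.proper
    exact ⟨i, Finset.mem_filter.mpr ⟨Finset.mem_univ i, hi⟩⟩
  -- points on the line
  have hxl : ∀ j : Fin (2 * g + 2), x (l j) = rf l.idxFun + sf l.idxFun * a j := by
    intro j
    rw [hxdef]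
    simp only []
    rw [hrfdef, hsfdef]
    simp only []
    rw [Finset.sum_mul, ← Finset.sum_add_distrib]
    apply Finset.sum_congr rfl
    intro i _
    have : l j i = (l.idxFun i).getD j := rfl
    cases hdi : l.idxFun i with
    | none => simp [this, hdi]
    | some v => simp [this, hdi]
  -- the factors are nonzero
  have hz : ∀ j : Fin (2 * g + 2), c - x (l j) ≠ 0 := by
    intro j h
    exact hc (Finset.mem_image.mpr ⟨l j, Finset.mem_univ _, (sub_eq_zero.mp h).symm⟩)
  set u : Fin (2 * g + 2) → Kˣ := fun j => Units.mk0 (c - x (l j)) (hz j) with hudef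
  have hclsu : ∀ j : Fin (2 * g + 2), π (u j) = q0 := by
    intro j
    have := hl j
    simpa [hclsdef, hudef, dif_neg (hz j)] using this
  have hq0sq : q0 ^ 2 = 1 := by
    have h0 : (0 : Fin (2 * g + 2)) = 0 := rfl
    rw [← hclsu 0, ← map_pow]
    exact (QuotientGroup.eq_one_iff _).mpr ⟨u 0, rfl⟩
  have hprod : π (∏ j, u j) = 1 := by
    rw [map_prod]
    calc (∏ j : Fin (2 * g + 2), π (u j)) = ∏ _j : Fin (2 * g + 2), q0 := by
          exact Finset.prod_congr rfl fun j _ => hclsu j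
      _ = q0 ^ (2 * g + 2) := by rw [Finset.prod_const, Finset.card_univ, Fintype.card_fin]
      _ = (q0 ^ 2) ^ (g + 1) := by rw [← pow_mul]; ring_nf
      _ = 1 := by rw [hq0sq, one_pow]
  obtain ⟨y, hy⟩ := (QuotientGroup.eq_one_iff _).mp hprod
  have hy2 : (y : K) ^ 2 = ∏ j, (c - x (l j)) := by
    have : ((y ^ 2 : Kˣ) : K) = ((∏ j, u j : Kˣ) : K) := by
      rw [show (y ^ 2 : Kˣ) = ∏ j, u j from hy]
    rw [Units.val_pow_eq_pow_val] at this
    rw [this]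
    exact (map_prod (Units.coeHom K) u Finset.univ).trans (Finset.prod_congr rfl fun j _ => rfl)
  refine ⟨(rf l.idxFun, sf l.idxFun), Finset.mem_image.mpr
    ⟨l.idxFun, Finset.mem_filter.mpr ⟨Finset.mem_univ _, hs0⟩, rfl⟩,
    (y : K) / (sf l.idxFun) ^ (g + 1), ?_⟩
  have hfac : ∀ j : Fin (2 * g + 2),
      (c - rf l.idxFun) / sf l.idxFun - a j = (c - x (l j)) / sf l.idxFun := by
    intro j
    rw [hxl j]
    field_simp
    ring
  calc ((y : K) / (sf l.idxFun) ^ (g + 1)) ^ 2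
      = (y : K) ^ 2 / (sf l.idxFun) ^ (2 * g + 2) := by
        rw [div_pow, ← pow_mul]; ring_nf
    _ = (∏ j, (c - x (l j))) / (sf l.idxFun) ^ (2 * g + 2) := by rw [hy2]
    _ = ∏ j : Fin (2 * g + 2), ((c - x (l j)) / sf l.idxFun) := by
        rw [Finset.prod_div_distrib, Finset.prod_const, Finset.card_univ, Fintype.card_fin]
    _ = ∏ j : Fin (2 * g + 2), ((c - (rf l.idxFun, sf l.idxFun).1) / (rf l.idxFun, sf l.idxFun).2 - a j) := by
        exact Finset.prod_congr rfl fun j _ => (hfac j).symm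
end

section
/- Every commutative ring that is finitely generated as a ℤ-algebra and is infinite (as a set) has infinitely many maximal ideals. -/
/-!
ℤ is a Jacobson ring, so a finitely generated ℤ-algebra `R` is Jacobson and Noetherian, and
its residue fields at maximal ideals are finite (a field finite over ℤ has positive
characteristic). If `R` had only finitely many maximal ideals, their product `J` would lie in
the Jacobson radical, which equals the nilradical, so `J ^ n = 0` for some `n`; since `R ⧸ J`
is finite and `J` is finitely generated, `R ≅ R ⧸ J ^ n` would be finite.
-/

theorem IsJacobsonRing.of_jacobson_bot_eq_bot {R : Type*} [CommRing R] [IsDomain R]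
    [Ring.DimensionLEOne R] (h : (⊥ : Ideal R).jacobson = ⊥) : IsJacobsonRing R := by
  rw [isJacobsonRing_iff_prime_eq]
  intro P hP
  rcases eq_or_ne P ⊥ with rfl | hP₀
  · exact h
  · have := Ring.DimensionLEOne.maximalOfPrime hP₀ hP
    exact Ideal.jacobson_eq_self_of_isMaximal

theorem Int.jacobson_bot : (⊥ : Ideal ℤ).jacobson = ⊥ := by
  refine le_bot_iff.mp fun x hx => ?_
  rw [Ideal.mem_jacobson_bot] at hx
  have h₁ := Int.isUnit_iff.mp (hx 1)
  have h₂ := Int.isUnit_iff.mp (hx (-1))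
  rw [Ideal.mem_bot]
  omega

instance Int.isJacobsonRing : IsJacobsonRing ℤ :=
  .of_jacobson_bot_eq_bot Int.jacobson_bot

theorem CharP.ne_zero_of_moduleFinite_int (K : Type*) [Field K] [Module.Finite ℤ K] (p : ℕ)
    [CharP K p] : p ≠ 0 := by
  rintro rfl
  have : CharZero K := CharP.charP_to_charZero K
  exact Int.not_isField <| isField_of_isIntegral_of_isField (algebraMap ℤ K).injective_int
    (Field.toIsField K)

theorem Field.finite_of_finiteType_int (K : Type*) [Field K] [Algebra.FiniteType ℤ K] :
    Finite K := by
  have : Module.Finite ℤ K := finite_of_finite_type_of_isJacobsonRing ℤ K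
  obtain ⟨p, hchar⟩ := CharP.exists K
  have hp : p.Prime := (CharP.char_is_prime_or_zero K p).resolve_right
    (CharP.ne_zero_of_moduleFinite_int K p)
  have : Fact p.Prime := ⟨hp⟩
  let : Algebra (ZMod p) K := ZMod.algebra K p
  have : Module.Finite (ZMod p) K := .of_restrictScalars_finite ℤ (ZMod p) K
  exact Module.finite_of_finite (ZMod p)

theorem finite_of_finite_setOf_isMaximal {R : Type*} [CommRing R] [IsNoetherianRing R]
    [IsJacobsonRing R] (h : {m : Ideal R | m.IsMaximal}.Finite)
    (hres : ∀ m : Ideal R, m.IsMaximal → Finite (R ⧸ m)) : Finite R := by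
  set J := ∏ m ∈ h.toFinset, m
  obtain ⟨n, hn⟩ := IsNoetherianRing.isNilpotent_nilradical R
  have hJn : J ^ n = ⊥ := by
    rw [← le_bot_iff, ← Ideal.zero_eq_bot, ← hn]
    gcongr
    rw [nilradical, Ideal.radical_eq_jacobson, Ideal.jacobson, le_sInf_iff]
    exact fun m hm => Ideal.prod_le_inf.trans (Finset.inf_le (by simpa using hm.2))
  have : Finite (R ⧸ J) := Ideal.finite_quotient_prod _ _
    (fun _ _ => IsNoetherian.noetherian _) (fun m hm => hres m (by simpa using hm))
  have := Ideal.finite_quotient_pow (IsNoetherian.noetherian J) n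
  rw [hJn] at this
  exact .of_equiv _ (RingEquiv.quotientBot R).toEquiv

/-- Every commutative ring which is a finitely generated `ℤ`-algebra and is infinite as a set
has infinitely many maximal ideals. -/
theorem stmt_7 (R : Type*) [CommRing R] (hR : Algebra.FiniteType ℤ R) [Infinite R] :
    {m : Ideal R | m.IsMaximal}.Infinite := by
  have : IsJacobsonRing R := isJacobsonRing_of_finiteType (A := ℤ)
  have : IsNoetherianRing R := Algebra.FiniteType.isNoetherianRing ℤ R
  refine fun h => Infinite.not_finite (finite_of_finite_setOf_isMaximal h fun m hm => ?_)
  -- the `FiniteType` instance of `R ⧸ m` is not found through the `Field` structure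
  exact @Field.finite_of_finiteType_int _ (Ideal.Quotient.field m)
    (hR.of_surjective _ (Ideal.Quotient.mkₐ_surjective ℤ m))
end

section
/- Let R be a commutative Noetherian ring and let I denote the nilradical of R. If the quotient ring R/I is finite (as a set), then R itself is finite. -/
/-- If `R` is a commutative Noetherian ring whose quotient by its nilradical is finite,
then `R` is finite. -/
theorem stmt_8 (R : Type*) [CommRing R] [IsNoetherianRing R]
    (h : Finite (R ⧸ nilradical R)) : Finite R := by
  obtain ⟨n, hn⟩ := IsNoetherianRing.isNilpotent_nilradical R
  have hfin := Ideal.finite_quotient_pow (IsNoetherian.noetherian (nilradical R)) n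
  rw [hn] at hfin
  exact Finite.of_equiv _ (RingEquiv.quotientBot R).toEquiv
end

section
/- Let p be a prime and r a natural number. Then every closed subgroup H of the general linear group GL_r(ℤ_p) over the p-adic integers is topologically finitely generated: there is a finite subset of H whose generated subgroup is dense in H. -/
/-!
Let `Kₙ = {g | g ≡ 1 mod pⁿ}` and, for `g = 1 + pⁿ • A ∈ Kₙ`, let `θₙ g = A mod p`
(`leadingTerm n g`). For `n ≥ 2` the binomial expansion gives `g ^ p ∈ Kₙ₊₁` and
`θₙ₊₁ (g ^ p) = θₙ g`, so for every subgroup `G` the sets `Vₙ(G) = θₙ (G ∩ Kₙ) ⊆ M_r(𝔽_p)` increase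
with `n`; being subsets of a finite set, they stabilise from some `N` on.

Let `W` be generated by finitely many elements of `H` meeting every coset of `H ∩ K_N` together with
finitely many elements of `H ∩ K_N` realising `V_N(H)`. Then `V_n(H) = V_N(H) ⊆ V_N(W) ⊆ V_n(W)`
for `n ≥ N`, and by induction on `n` every `h ∈ H` is congruent mod `pⁿ` to an element of `W`.
These elements converge to `h`.
-/

open Filter Topology

theorem Set.exists_finite_subset_image_eq {α β : Type*} [Finite β] (f : α → β) (s : Set α) :
    ∃ t ⊆ s, t.Finite ∧ f '' t = f '' s := by
  obtain ⟨t, hts, hbij⟩ := s.exists_subset_bijOn f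
  exact ⟨t, hts, (Set.toFinite _).of_finite_image hbij.injOn, hbij.image_eq⟩

theorem exists_one_add_pow_eq_one_add_mul_add_sq_mul {R : Type*} [Semiring R] (x : R) (q : ℕ) :
    ∃ d, (1 + x) ^ q = 1 + q * x + x ^ 2 * d := by
  induction q with
  | zero => exact ⟨0, by simp⟩
  | succ q ih =>
    obtain ⟨d, hd⟩ := ih
    refine ⟨q + d + d * x, ?_⟩
    rw [pow_succ, hd]
    push_cast
    simp only [mul_add, add_mul, one_mul, mul_one, sq, mul_assoc, (Nat.cast_commute q x).eq]
    abel

theorem exists_one_add_pow_smul_pow_eq {R M : Type*} [CommSemiring R] [Semiring M] [Algebra R M]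
    {q n : ℕ} (hn : 2 ≤ n) (A : M) :
    ∃ C : M, (1 + (q : R) ^ n • A) ^ q = 1 + (q : R) ^ (n + 1) • (A + (q : R) • C) := by
  obtain ⟨d, hd⟩ := exists_one_add_pow_eq_one_add_mul_add_sq_mul ((q : R) ^ n • A) q
  refine ⟨(q : R) ^ (n - 2) • (A ^ 2 * d), ?_⟩
  obtain ⟨k, rfl⟩ := Nat.exists_eq_add_of_le hn
  rw [hd, ← nsmul_eq_mul, ← Nat.cast_smul_eq_nsmul R, smul_smul, smul_pow, Algebra.smul_mul_assoc,
    smul_add, smul_smul, smul_smul, Nat.add_sub_cancel_left, add_assoc]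
  congr 3 <;> ring

namespace Matrix

theorem exists_eq_add_smul_of_map_eq {m n R S : Type*} [CommRing R] [CommRing S] {f : R →+* S}
    {t : R} (hf : RingHom.ker f = Ideal.span {t}) {M N : Matrix m n R} (h : M.map f = N.map f) :
    ∃ C : Matrix m n R, N = M + t • C := by
  have hdvd : ∀ i j, t ∣ N i j - M i j := fun i j => by
    rw [← Ideal.mem_span_singleton, ← hf, RingHom.mem_ker, map_sub, sub_eq_zero]
    exact congr_fun₂ h i j |>.symm
  choose C hC using hdvd
  exact ⟨of C, by ext i j; simp [← hC]⟩

theorem tendsto_pow_smul_nhds_zero {m n : Type*} {p : ℕ} [Fact p.Prime] {t : ℤ_[p]}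
    (ht : ‖t‖ < 1) (A : ℕ → Matrix m n ℤ_[p]) : Tendsto (fun k => t ^ k • A k) atTop (𝓝 0) := by
  refine tendsto_pi_nhds.2 fun i => tendsto_pi_nhds.2 fun j => ?_
  refine squeeze_zero_norm (a := fun k => ‖t ^ k‖) (fun k => ?_)
    ((tendsto_norm_zero (E := ℤ_[p])).comp (tendsto_pow_atTop_nhds_zero_of_norm_lt_one ht))
  simpa using mul_le_of_le_one_right (norm_nonneg (t ^ k)) (PadicInt.norm_le_one (A k i j))

namespace GeneralLinearGroup

variable {ι R S : Type*} [Fintype ι] [DecidableEq ι] [CommRing R] [CommRing S]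

def congruenceSubgroup (t : R) : Subgroup (GL ι R) where
  carrier := {g | ∃ A : Matrix ι ι R, (g : Matrix ι ι R) = 1 + t • A}
  one_mem' := ⟨0, by simp⟩
  mul_mem' := by
    rintro g h ⟨A, hA⟩ ⟨B, hB⟩
    refine ⟨A + B + t • (A * B), ?_⟩
    rw [Units.val_mul, hA, hB]
    simp only [add_mul, mul_add, one_mul, mul_one, smul_mul_smul_comm, smul_add, mul_smul]
    abel
  inv_mem' := by
    rintro g ⟨A, hA⟩
    refine ⟨-((g⁻¹ : GL ι R) * A), ?_⟩
    calc ((g⁻¹ : GL ι R) : Matrix ι ι R) = ↑g⁻¹ * (↑g - t • A) := by simp [hA]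
      _ = _ := by rw [mul_sub, Units.inv_mul, mul_smul_comm, smul_neg, sub_eq_add_neg]

theorem congruenceSubgroup_mono {s t : R} (h : t ∣ s) :
    congruenceSubgroup (ι := ι) s ≤ congruenceSubgroup t := by
  obtain ⟨c, rfl⟩ := h
  rintro g ⟨A, hA⟩
  exact ⟨c • A, by rw [hA, mul_smul]⟩

theorem inv_mul_mem_congruenceSubgroup {t : R} {w y : GL ι R} {C : Matrix ι ι R}
    (h : (y : Matrix ι ι R) = w + t • C) : w⁻¹ * y ∈ congruenceSubgroup t :=
  ⟨((w⁻¹ : GL ι R) : Matrix ι ι R) * C, by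
    rw [Units.val_mul, h, mul_add, Units.inv_mul, mul_smul_comm]⟩

theorem inv_mul_mem_congruenceSubgroup_of_map_eq {f : R →+* S} {t : R}
    (hf : RingHom.ker f = Ideal.span {t}) {w y : GL ι R}
    (h : (w : Matrix ι ι R).map f = (y : Matrix ι ι R).map f) :
    w⁻¹ * y ∈ congruenceSubgroup t :=
  have ⟨_, hC⟩ := exists_eq_add_smul_of_map_eq hf h
  inv_mul_mem_congruenceSubgroup hC

section Padic

variable {p : ℕ} [Fact p.Prime]

theorem tendsto_one_of_mem_congruenceSubgroup {u : ℕ → GL ι ℤ_[p]}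
    (hu : ∀ n, u n ∈ congruenceSubgroup ((p : ℤ_[p]) ^ n)) : Tendsto u atTop (𝓝 1) := by
  have hp : ‖(p : ℤ_[p])‖ < 1 := by simpa using Padic.norm_p_lt_one (p := p)
  have hval : ∀ v : ℕ → GL ι ℤ_[p], (∀ n, v n ∈ congruenceSubgroup ((p : ℤ_[p]) ^ n)) →
      Tendsto (fun n => (v n : Matrix ι ι ℤ_[p])) atTop (𝓝 1) := fun v hv => by
    choose A hA using hv
    simpa [hA] using tendsto_const_nhds.add (tendsto_pow_smul_nhds_zero hp A)
  rw [Units.isEmbedding_embedProduct.tendsto_nhds_iff]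
  exact (hval u hu).prodMk_nhds <| (MulOpposite.continuous_op.tendsto _).comp <|
    hval _ fun n => inv_mem (hu n)

theorem mem_closure_of_forall_exists_inv_mul_mem {W : Subgroup (GL ι ℤ_[p])} {g : GL ι ℤ_[p]}
    (h : ∀ n, ∃ w ∈ W, w⁻¹ * g ∈ congruenceSubgroup ((p : ℤ_[p]) ^ n)) :
    g ∈ closure (W : Set (GL ι ℤ_[p])) := by
  choose w hwW hw using h
  have hlim : Tendsto w atTop (𝓝 g) := by
    simpa using (tendsto_const_nhds (x := g)).mul (tendsto_one_of_mem_congruenceSubgroup hw).inv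
  exact mem_closure_of_tendsto hlim (Eventually.of_forall hwW)

open Classical in
/-- For `g = 1 + p ^ n • A`, the reduction of `A` mod `p`, well defined since `p ^ n` is not a
zero divisor; junk value `0` if `g` is not of this form. -/
noncomputable def leadingTerm (n : ℕ) (g : GL ι ℤ_[p]) : Matrix ι ι (ZMod p) :=
  if h : ∃ A : Matrix ι ι ℤ_[p], (g : Matrix ι ι ℤ_[p]) = 1 + (p : ℤ_[p]) ^ n • A then
    h.choose.map PadicInt.toZMod
  else 0

theorem leadingTerm_eq {n : ℕ} {g : GL ι ℤ_[p]} {A : Matrix ι ι ℤ_[p]}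
    (hA : (g : Matrix ι ι ℤ_[p]) = 1 + (p : ℤ_[p]) ^ n • A) :
    leadingTerm n g = A.map PadicInt.toZMod := by
  have h : ∃ A : Matrix ι ι ℤ_[p], (g : Matrix ι ι ℤ_[p]) = 1 + (p : ℤ_[p]) ^ n • A := ⟨A, hA⟩
  have hp : (p : ℤ_[p]) ^ n ≠ 0 := pow_ne_zero _ (Nat.cast_ne_zero.2 (Fact.out : p.Prime).ne_zero)
  rw [leadingTerm, dif_pos h,
    smul_right_injective _ hp (add_left_cancel (h.choose_spec.symm.trans hA))]

theorem inv_mul_mem_of_leadingTerm_eq {n : ℕ} {w y : GL ι ℤ_[p]}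
    (hw : w ∈ congruenceSubgroup ((p : ℤ_[p]) ^ n)) (hy : y ∈ congruenceSubgroup ((p : ℤ_[p]) ^ n))
    (h : leadingTerm n w = leadingTerm n y) :
    w⁻¹ * y ∈ congruenceSubgroup ((p : ℤ_[p]) ^ (n + 1)) := by
  obtain ⟨A, hA⟩ := hw
  obtain ⟨B, hB⟩ := hy
  rw [leadingTerm_eq hA, leadingTerm_eq hB] at h
  obtain ⟨C, rfl⟩ := exists_eq_add_smul_of_map_eq
    (PadicInt.ker_toZMod.trans PadicInt.maximalIdeal_eq_span_p) h
  refine inv_mul_mem_congruenceSubgroup (C := C) ?_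
  rw [hB, hA, smul_add, smul_smul, ← pow_succ, add_assoc]

theorem pow_mem_succ_and_leadingTerm_pow {n : ℕ} (hn : 2 ≤ n) {g : GL ι ℤ_[p]}
    (hg : g ∈ congruenceSubgroup ((p : ℤ_[p]) ^ n)) :
    g ^ p ∈ congruenceSubgroup ((p : ℤ_[p]) ^ (n + 1)) ∧
      leadingTerm (n + 1) (g ^ p) = leadingTerm n g := by
  obtain ⟨A, hA⟩ := hg
  obtain ⟨C, hC⟩ := exists_one_add_pow_smul_pow_eq (R := ℤ_[p]) (q := p) hn A
  rw [← hA, ← Units.val_pow_eq_pow_val] at hC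
  refine ⟨⟨_, hC⟩, ?_⟩
  rw [leadingTerm_eq hC, leadingTerm_eq hA]
  ext i j
  simp

def leadingTermImage (G : Subgroup (GL ι ℤ_[p])) (n : ℕ) : Set (Matrix ι ι (ZMod p)) :=
  leadingTerm n '' ↑(G ⊓ congruenceSubgroup ((p : ℤ_[p]) ^ n))

theorem leadingTermImage_mono (G : Subgroup (GL ι ℤ_[p])) {m n : ℕ} (hm : 2 ≤ m) (hmn : m ≤ n) :
    leadingTermImage G m ⊆ leadingTermImage G n := by
  induction n, hmn using Nat.le_induction with
  | base => exact subset_rfl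
  | succ n hmn ih =>
    refine ih.trans ?_
    rintro _ ⟨g, ⟨hgG, hgK⟩, rfl⟩
    obtain ⟨hpow, hlead⟩ := pow_mem_succ_and_leadingTerm_pow (hm.trans hmn) hgK
    exact ⟨g ^ p, ⟨pow_mem hgG p, hpow⟩, hlead⟩

theorem exists_leadingTermImage_eq (G : Subgroup (GL ι ℤ_[p])) :
    ∃ N ≥ 2, ∀ n ≥ N, leadingTermImage G n = leadingTermImage G N := by
  have hmono : Monotone fun k => leadingTermImage G (k + 2) := fun k l hkl =>
    leadingTermImage_mono G (by omega) (by omega)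
  obtain ⟨N, hN⟩ := WellFoundedGT.monotone_chain_condition ⟨_, hmono⟩
  refine ⟨N + 2, by omega, fun n hn => ?_⟩
  obtain ⟨k, rfl⟩ := Nat.exists_eq_add_of_le' hn
  exact (hN (k + N) (by omega)).symm

theorem exists_inv_mul_mem_congruenceSubgroup {H W : Subgroup (GL ι ℤ_[p])} (hWH : W ≤ H)
    {N : ℕ} (hN : 2 ≤ N) (hbase : ∀ h ∈ H, ∃ w ∈ W, w⁻¹ * h ∈ congruenceSubgroup ((p : ℤ_[p]) ^ N))
    (hstab : ∀ n ≥ N, leadingTermImage H n = leadingTermImage H N)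
    (hlead : leadingTermImage H N ⊆ leadingTermImage W N) (n : ℕ) :
    ∀ h ∈ H, ∃ w ∈ W, w⁻¹ * h ∈ congruenceSubgroup ((p : ℤ_[p]) ^ n) := by
  suffices hge : ∀ k ≥ N, ∀ h ∈ H, ∃ w ∈ W, w⁻¹ * h ∈ congruenceSubgroup ((p : ℤ_[p]) ^ k) by
    intro h hh
    obtain ⟨w, hw, hwh⟩ := hge (max N n) (le_max_left _ _) h hh
    exact ⟨w, hw, congruenceSubgroup_mono (pow_dvd_pow _ (le_max_right _ _)) hwh⟩
  intro k hk
  induction k, hk using Nat.le_induction with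
  | base => exact hbase
  | succ k hk ih =>
    intro h hh
    obtain ⟨c, hcW, hc⟩ := ih h hh
    have hy : leadingTerm k (c⁻¹ * h) ∈ leadingTermImage W k :=
      ((hstab k hk).trans_subset hlead |>.trans (leadingTermImage_mono W hN hk))
        ⟨_, ⟨H.mul_mem (H.inv_mem (hWH hcW)) hh, hc⟩, rfl⟩
    obtain ⟨w, ⟨hwW, hw⟩, hwy⟩ := hy
    refine ⟨c * w, W.mul_mem hcW hwW, ?_⟩
    rw [show (c * w)⁻¹ * h = w⁻¹ * (c⁻¹ * h) by group]
    exact inv_mul_mem_of_leadingTerm_eq hw hc hwy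

end Padic

end GeneralLinearGroup
end Matrix

open Matrix.GeneralLinearGroup

theorem stmt_12_general (p : ℕ) [Fact p.Prime] (r : ℕ)
    (H : Subgroup (Matrix.GeneralLinearGroup (Fin r) ℤ_[p])) :
    ∃ S : Finset (Matrix.GeneralLinearGroup (Fin r) ℤ_[p]),
      (S : Set (Matrix.GeneralLinearGroup (Fin r) ℤ_[p])) ⊆ (H : Set _) ∧
      (H : Set (Matrix.GeneralLinearGroup (Fin r) ℤ_[p])) ⊆
        closure ((Subgroup.closure (S : Set (Matrix.GeneralLinearGroup (Fin r) ℤ_[p]))) :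
          Set (Matrix.GeneralLinearGroup (Fin r) ℤ_[p])) := by
  obtain ⟨N, hN, hstab⟩ := exists_leadingTermImage_eq H
  obtain ⟨T, hTH, hT, hTeq⟩ := Set.exists_finite_subset_image_eq
    (fun g : GL (Fin r) ℤ_[p] => (g : Matrix (Fin r) (Fin r) ℤ_[p]).map (PadicInt.toZModPow N)) H
  obtain ⟨U, hUH, hU, hUeq⟩ := Set.exists_finite_subset_image_eq (leadingTerm N)
    ((H ⊓ congruenceSubgroup ((p : ℤ_[p]) ^ N) : Subgroup (GL (Fin r) ℤ_[p])) :
      Set (GL (Fin r) ℤ_[p]))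
  have hTU := hT.union hU
  have hSH : (hTU.toFinset : Set (GL (Fin r) ℤ_[p])) ⊆ H := by
    simpa using Set.union_subset hTH (hUH.trans fun _ hg => hg.1)
  refine ⟨hTU.toFinset, hSH, fun h hh => ?_⟩
  set W := Subgroup.closure (hTU.toFinset : Set (GL (Fin r) ℤ_[p]))
  have hTW : T ⊆ W := fun g hg => Subgroup.subset_closure (by simp [hg])
  have hUW : U ⊆ W := fun g hg => Subgroup.subset_closure (by simp [hg])
  refine mem_closure_of_forall_exists_inv_mul_mem fun n => exists_inv_mul_mem_congruenceSubgroup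
    ((Subgroup.closure_le H).2 hSH) hN ?_ hstab ?_ n h hh
  · intro h hh
    obtain ⟨w, hw, hwh⟩ := hTeq.superset (Set.mem_image_of_mem _ hh)
    exact ⟨w, hTW hw, inv_mul_mem_congruenceSubgroup_of_map_eq (PadicInt.ker_toZModPow N) hwh⟩
  · rw [leadingTermImage, ← hUeq]
    exact Set.image_mono fun g hg => ⟨hUW hg, (hUH hg).2⟩

/-- Every closed subgroup `H` of `GL_r(ℤ_p)` is topologically finitely generated: there is a
finite subset of `H` whose generated subgroup is dense in `H` (i.e. `H` is contained in the
closure of the subgroup it generates). -/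
theorem stmt_12 (p : ℕ) [Fact p.Prime] (r : ℕ)
    (H : Subgroup (Matrix.GeneralLinearGroup (Fin r) ℤ_[p]))
    (hH : IsClosed (H : Set (Matrix.GeneralLinearGroup (Fin r) ℤ_[p]))) :
    ∃ S : Finset (Matrix.GeneralLinearGroup (Fin r) ℤ_[p]),
      (S : Set (Matrix.GeneralLinearGroup (Fin r) ℤ_[p])) ⊆ (H : Set _) ∧
      (H : Set (Matrix.GeneralLinearGroup (Fin r) ℤ_[p])) ⊆
        closure ((Subgroup.closure (S : Set (Matrix.GeneralLinearGroup (Fin r) ℤ_[p]))) :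
          Set (Matrix.GeneralLinearGroup (Fin r) ℤ_[p])) :=
  stmt_12_general p r H
end

section
/- Let G be a topological group that is topologically finitely generated, i.e., there is a finite subset of G whose generated subgroup is dense in G. Then for every natural number d, the set of open subgroups of G of index at most d is finite. -/
/-!
Let `D` be the subgroup generated by a finite set with dense image. A subgroup `K ≤ D` of index
at most `d` is the stabilizer of `e 1` for the action of `D` on `Fin d` transported along an
embedding `e : D ⧸ K ↪ Fin d`, so it is determined by a homomorphism `D →* Equiv.Perm (Fin d)`
and a point of `Fin d`; there are finitely many such homomorphisms because `D` is finitely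
generated. An open subgroup `H` of `G` is closed, so `H = closure (H ∩ D)` is determined by
`H ∩ D`, whose index in `D` is at most that of `H`.
-/

open Cardinal MulAction

instance MonoidHom.finite_of_fg {D P : Type*} [Group D] [Group P] [Group.FG D] [Finite P] :
    Finite (D →* P) := by
  obtain ⟨S, hS⟩ := Group.FG.out (G := D)
  exact Finite.of_injective (fun f : D →* P => (S : Set D).domRestrict f) fun _ _ hfg =>
    MonoidHom.eq_of_eqOn_dense hS fun x hx => congrFun hfg ⟨x, hx⟩

theorem MulAction.stabilizer_eq_comap_viaEmbeddingHom {D X Y : Type*} [Group D] [MulAction D X]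
    (e : X ↪ Y) (x : X) :
    stabilizer D x = (stabilizer (Equiv.Perm Y) (e x)).comap
      ((Equiv.Perm.viaEmbeddingHom e).comp (toPermHom D X)) := by
  ext g
  simp [Equiv.Perm.viaEmbeddingHom_apply, Equiv.Perm.viaEmbedding_apply]

theorem Subgroup.finite_setOf_mk_quotient_le {D : Type*} [Group D] [Group.FG D] (d : ℕ) :
    {K : Subgroup D | #(D ⧸ K) ≤ d}.Finite := by
  refine (Set.finite_range fun p : (D →* Equiv.Perm (Fin d)) × Fin d =>
    (stabilizer (Equiv.Perm (Fin d)) p.2).comap p.1).subset ?_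
  intro K hK
  obtain ⟨e⟩ : Nonempty (D ⧸ K ↪ Fin d) := lift_mk_le'.1 (by simpa using hK)
  exact ⟨(_, e ((1 : D) : D ⧸ K)),
    (stabilizer_eq_comap_viaEmbeddingHom e _).symm.trans (stabilizer_quotient K)⟩

theorem Subgroup.mk_quotient_subgroupOf_le {G : Type*} [Group G] (H K : Subgroup G) :
    #(K ⧸ H.subgroupOf K) ≤ #(G ⧸ H) := by
  refine mk_le_of_injective (f := Quotient.map' Subtype.val fun a b => ?_) ?_
  · simp_rw [QuotientGroup.leftRel_eq]
    exact id
  · refine Quotient.ind₂' fun a b hab => ?_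
    simpa only [Quotient.map'_mk'', QuotientGroup.eq, Subgroup.mem_subgroupOf, Subgroup.coe_mul,
      InvMemClass.coe_inv] using hab

theorem Subgroup.closure_inter_eq_of_isOpen {G : Type*} [Group G] [TopologicalSpace G]
    [SeparatelyContinuousMul G] {H : Subgroup G} {s : Set G} (hs : Dense s)
    (hH : IsOpen (H : Set G)) : _root_.closure ((H : Set G) ∩ s) = H :=
  ((_root_.closure_mono Set.inter_subset_left).trans
    (H.isClosed_of_isOpen hH).closure_subset).antisymm (hs.open_subset_closure_inter hH)

theorem Subgroup.subgroupOf_injOn_isOpen {G : Type*} [Group G] [TopologicalSpace G]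
    [SeparatelyContinuousMul G] {D : Subgroup G} (hD : Dense (D : Set G)) :
    {H : Subgroup G | IsOpen (H : Set G)}.InjOn (·.subgroupOf D) := by
  intro H₁ h₁ H₂ h₂ heq
  have hinf : (H₁ : Set G) ∩ D = (H₂ : Set G) ∩ D := by
    simpa only [Subgroup.coe_inf] using congrArg SetLike.coe (Subgroup.subgroupOf_inj.1 heq)
  apply SetLike.coe_injective
  rw [← closure_inter_eq_of_isOpen hD h₁, ← closure_inter_eq_of_isOpen hD h₂, hinf]

/-- If `G` is a topologically finitely generated topological group, then for every `d : ℕ`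
the set of open subgroups of `G` of index at most `d` (i.e. with coset space of cardinality
at most `d`) is finite. -/
theorem stmt_13 (G : Type*) [Group G] [TopologicalSpace G] [IsTopologicalGroup G]
    (htfg : ∃ S : Finset G, Dense ((Subgroup.closure (S : Set G) : Subgroup G) : Set G))
    (d : ℕ) :
    {H : Subgroup G | IsOpen (H : Set G) ∧ Cardinal.mk (G ⧸ H) ≤ d}.Finite := by
  obtain ⟨S, hS⟩ := htfg
  set D := Subgroup.closure (S : Set G)
  have : Group.FG D := (Group.fg_iff_subgroup_fg D).2 ⟨S, rfl⟩
  refine Set.Finite.of_finite_image ((Subgroup.finite_setOf_mk_quotient_le (D := D) d).subset ?_)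
    ((Subgroup.subgroupOf_injOn_isOpen hS).mono fun _ hH => hH.1)
  rintro _ ⟨H, ⟨-, hH⟩, rfl⟩
  exact (H.mk_quotient_subgroupOf_le D).trans hH
end
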